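/- arXiv:1107.0848 — 8 statements merged into one kernel-verified Lean document; each statement's English description precedes it below -/
import Mathlib

section
/- In the three-door game, for every Conie strategy (x, d) there exists a door u : Fin 3 such that for every Monte strategy m and every prize door p, Conie's final choice z is never equal to u; in particular she never wins when p = u. -/
/-- The door Monte offers: if Conie's guess `x` equals the prize door `p`,
Monte offers `m p`; otherwise he is forced to reveal the third door, so the
offer is `p` itself. -/
def offered (m : Fin 3 → Fin 3) (x p : Fin 3) : Fin 3 :=
  if p = x then m p else p

/-- Conie's final choice given her strategy `(x, d)`, Monte's strategy `m`
and prize door `p`: she switches to the offered door `y` if `d y = true`,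
else holds `x`. -/
def finalChoice (x : Fin 3) (d : Fin 3 → Bool) (m : Fin 3 → Fin 3) (p : Fin 3) : Fin 3 :=
  if d (offered m x p) then offered m x p else x

/-- For every Conie strategy `(x, d)` there is a door `u` that is never her
final choice, whatever Monte's strategy and the prize location; in particular
she never wins when `p = u`. -/
theorem exists_never_chosen_door (x : Fin 3) (d : Fin 3 → Bool) :
    ∃ u : Fin 3,
      (∀ (m : Fin 3 → Fin 3), (∀ v, m v ≠ v) →
        ∀ p : Fin 3, finalChoice x d m p ≠ u) ∧
      (∀ (m : Fin 3 → Fin 3), (∀ v, m v ≠ v) →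
        ∀ p : Fin 3, p = u → finalChoice x d m p ≠ p) := by
  have key : ∃ u : Fin 3,
      ∀ (m : Fin 3 → Fin 3), (∀ v, m v ≠ v) →
        ∀ p : Fin 3, finalChoice x d m p ≠ u := by
    by_cases h : ∀ u : Fin 3, u ≠ x → d u = true
    · refine ⟨x, fun m hm p => ?_⟩
      have hoff : offered m x p ≠ x := by
        unfold offered
        split
        · next hp => rw [hp]; exact hm x
        · next hp => exact hp
      unfold finalChoice
      rw [h _ hoff]
      simpa using hoff
    · push_neg at h
      obtain ⟨u, hux, hdu⟩ := h
      refine ⟨u, fun m hm p => ?_⟩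
      unfold finalChoice
      split
      · next hd =>
        intro he
        rw [he] at hd
        exact hdu hd
      · exact fun he => hux he.symm
  obtain ⟨u, hu⟩ := key
  exact ⟨u, hu, fun m hm p hp => hp ▸ hu m hm p⟩
end

section
/- (The Unlucky Door Theorem.) In the three-door game, for every Conie strategy (x, d) there exists a door u : Fin 3 (depending only on the strategy, not on the prize location or on Monte's strategy) such that for every Monte strategy m, if the prize door p equals u then Conie loses, i.e. her final choice z is not equal to p. -/
/-- **The Unlucky Door Theorem.** For every Conie strategy `(x, d)` there is an
unlucky door `u` (depending only on the strategy) such that whenever the prize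
is behind `u`, Conie loses against every Monte strategy. -/
theorem unlucky_door (x : Fin 3) (d : Fin 3 → Bool) :
    ∃ u : Fin 3, ∀ (m : Fin 3 → Fin 3), (∀ v, m v ≠ v) →
      ∀ p : Fin 3, p = u → finalChoice x d m p ≠ p := by
  by_cases h : ∀ y, y ≠ x → d y = true
  · refine ⟨x, fun m hm p hp => ?_⟩
    subst p
    simp only [finalChoice, offered, if_pos rfl, h (m x) (hm x), if_true]
    exact hm x
  · push_neg at h
    obtain ⟨y, hyx, hy⟩ := h
    refine ⟨y, fun m hm p hp => ?_⟩
    subst p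
    have hd : d y = false := by simpa using hy
    simp only [finalChoice, offered, if_neg hyx, hd, Bool.false_eq_true, if_false]
    exact fun e => hyx e.symm
end

section
/- In the three-door game, for any initial choice x : Fin 3, the always-switching strategy (x, fun _ => true) wins if and only if the prize door p is different from x, regardless of Monte's strategy m; consequently, for every Monte strategy m, the set of prize doors p for which this strategy wins has exactly 2 elements. -/
/-- Any always-switching strategy wins exactly when the prize is not behind the
initially chosen door, whatever Monte's strategy; consequently it wins for
exactly 2 of the 3 possible prize doors. -/
theorem always_switch_wins_iff (x : Fin 3) :
    (∀ (m : Fin 3 → Fin 3), (∀ v, m v ≠ v) →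
      ∀ p : Fin 3, (finalChoice x (fun _ => true) m p = p ↔ p ≠ x)) ∧
    (∀ (m : Fin 3 → Fin 3), (∀ v, m v ≠ v) →
      (Finset.univ.filter (fun p => finalChoice x (fun _ => true) m p = p)).card = 2) := by
  have key : ∀ (m : Fin 3 → Fin 3), (∀ v, m v ≠ v) →
      ∀ p : Fin 3, (finalChoice x (fun _ => true) m p = p ↔ p ≠ x) := by
    intro m hm p
    simp only [finalChoice, offered, if_true]
    by_cases h : p = x
    · simp [h, (hm x)]
    · simp [h]
  refine ⟨key, fun m hm => ?_⟩
  have : (Finset.univ.filter (fun p => finalChoice x (fun _ => true) m p = p))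
      = Finset.univ.filter (fun p => p ≠ x) := by
    apply Finset.filter_congr
    intro p _
    simpa using key m hm p
  rw [this, Finset.filter_ne']
  simp [Finset.card_erase_of_mem]
end

section
/- In the three-door game, every Conie strategy is weakly dominated by some always-switching strategy: for every Conie strategy (x, d) there exists a door u : Fin 3 such that, for every Monte strategy m and every prize door p, if the strategy (x, d) wins against m with prize door p, then the always-switching strategy (u, fun _ => true) also wins against m with prize door p. -/
/-- Every Conie strategy `(x, d)` is weakly dominated by some always-switching
strategy `(u, fun _ => true)`: whenever `(x, d)` wins, so does the
always-switching strategy. -/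
theorem weakly_dominated_by_always_switch (x : Fin 3) (d : Fin 3 → Bool) :
    ∃ u : Fin 3, ∀ (m : Fin 3 → Fin 3), (∀ v, m v ≠ v) →
      ∀ p : Fin 3, finalChoice x d m p = p →
        finalChoice u (fun _ => true) m p = p := by
  revert x d
  decide
end

section
/- In the three-door game, no pair of strategies makes Conie a sure winner: for every Conie strategy (x, d) and every Monte strategy m, the set of prize doors p : Fin 3 for which Conie wins has at most 2 elements; equivalently there exists p for which she loses. -/
/-- No pair of strategies makes Conie a sure winner: for every Conie strategy
`(x, d)` and every Monte strategy `m`, Conie wins for at most 2 of the 3 prize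
doors; equivalently, there is a prize door for which she loses. -/
theorem no_sure_winner (x : Fin 3) (d : Fin 3 → Bool)
    (m : Fin 3 → Fin 3) (hm : ∀ v, m v ≠ v) :
    (Finset.univ.filter (fun p => finalChoice x d m p = p)).card ≤ 2 ∧
    ∃ p : Fin 3, finalChoice x d m p ≠ p := by
  have hlose : ∃ p : Fin 3, finalChoice x d m p ≠ p := by
    by_cases h : d (m x) = true
    · refine ⟨x, ?_⟩
      simp [finalChoice, offered, h]
      exact hm x
    · refine ⟨m x, ?_⟩
      have hmx : m x ≠ x := hm x
      simp [finalChoice, offered, hmx, h]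
      exact fun he => hm x he.symm
  refine ⟨?_, hlose⟩
  obtain ⟨p, hp⟩ := hlose
  have hsub : (Finset.univ.filter (fun q => finalChoice x d m q = q)) ⊆
      Finset.univ.erase p := by
    intro q hq
    simp only [Finset.mem_filter] at hq
    refine Finset.mem_erase.2 ⟨?_, Finset.mem_univ q⟩
    rintro rfl; exact hp hq.2
  calc (Finset.univ.filter (fun q => finalChoice x d m q = q)).card
      ≤ (Finset.univ.erase p).card := Finset.card_le_card hsub
    _ ≤ 2 := by simp [Finset.card_erase_of_mem]
end

section
/- In the three-door game with the prize door p chosen uniformly at random from Fin 3, every always-switching strategy (x, fun _ => true) wins with probability exactly 2/3 against every Monte strategy m: the probability under the uniform distribution on Fin 3 of the event {p | Conie wins against m with prize door p} equals 2/3. -/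
theorem finalChoice_switch_eq_iff {x p : Fin 3} {m : Fin 3 → Fin 3} (hmx : m x ≠ x) :
    finalChoice x (fun _ => true) m p = p ↔ p ≠ x := by
  by_cases hp : p = x
  · subst hp
    simpa [finalChoice, offered] using hmx
  · simp [finalChoice, offered, hp]

theorem PMF.toMeasure_uniformOfFintype_compl_singleton {α : Type*} [Fintype α] [Nonempty α]
    [MeasurableSpace α] [MeasurableSingletonClass α] (a : α) :
    (PMF.uniformOfFintype α).toMeasure {a}ᶜ = (Fintype.card α - 1 : ℕ) / Fintype.card α := by
  classical
  rw [PMF.toMeasure_uniformOfFintype_apply _ (measurableSet_singleton a).compl,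
    Fintype.card_compl_set, Set.card_singleton]

/-- With the prize door uniformly random on `Fin 3`, every always-switching
strategy wins with probability exactly `2/3` against every Monte strategy. -/
theorem always_switch_wins_prob_two_thirds (x : Fin 3)
    (m : Fin 3 → Fin 3) (hm : ∀ v, m v ≠ v) :
    (PMF.uniformOfFintype (Fin 3)).toMeasure
      {p : Fin 3 | finalChoice x (fun _ => true) m p = p} = 2 / 3 := by
  have hwin : {p : Fin 3 | finalChoice x (fun _ => true) m p = p} = {x}ᶜ :=
    Set.ext fun _ => finalChoice_switch_eq_iff (hm x)
  rw [hwin, PMF.toMeasure_uniformOfFintype_compl_singleton]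
  norm_num
end

section
/- In the three-door game with the prize door p chosen uniformly at random from Fin 3, no Conie strategy achieves winning probability greater than 2/3: for every Conie strategy (x, d) and every Monte strategy m, the probability under the uniform distribution on Fin 3 of the event {p | Conie wins against m with prize door p} is at most 2/3. -/
/-- With the prize door uniformly random on `Fin 3`, no Conie strategy wins
with probability greater than `2/3`, against any Monte strategy. -/
theorem no_strategy_beats_two_thirds (x : Fin 3) (d : Fin 3 → Bool)
    (m : Fin 3 → Fin 3) (hm : ∀ v, m v ≠ v) :
    (PMF.uniformOfFintype (Fin 3)).toMeasure
      {p : Fin 3 | finalChoice x d m p = p} ≤ 2 / 3 := by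
  have key : ∃ p0 : Fin 3, finalChoice x d m p0 ≠ p0 := by
    by_cases h : d (m x)
    · exact ⟨x, by simp [finalChoice, offered, h, hm x]⟩
    · exact ⟨m x, by simp [finalChoice, offered, hm x, h, (hm x).symm]⟩
  obtain ⟨p0, hp0⟩ := key
  have hsub : {p : Fin 3 | finalChoice x d m p = p} ⊆ ({p0} : Set (Fin 3))ᶜ := by
    intro p hp hmem
    rw [Set.mem_singleton_iff] at hmem
    exact hp0 (hmem ▸ hp)
  refine le_trans (MeasureTheory.measure_mono hsub) ?_
  have h1 : (PMF.uniformOfFintype (Fin 3)).toMeasure {p0} = 1 / 3 := by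
    rw [PMF.toMeasure_apply_singleton _ _ (measurableSet_singleton p0),
      PMF.uniformOfFintype_apply]
    simp [ENNReal.div_eq_inv_mul]
  rw [MeasureTheory.measure_compl (measurableSet_singleton p0) (by simp [h1]), h1,
    tsub_le_iff_right, ENNReal.div_add_div_same, MeasureTheory.measure_univ,
    show ((2:ENNReal)+1) = 3 by norm_num, ENNReal.div_self (by norm_num) (by norm_num)]
end

section
/- In the four-door game with sequential revelation, Monte can signal the prize location perfectly: there exist a function f : Fin 4 → Fin 4 → Fin 4 × Fin 4 and a decoding function g : Fin 4 → Fin 4 × Fin 4 → Fin 4 such that for all p x : Fin 4, writing f p x = (r₁, r₂), we have r₁ ≠ p, r₁ ≠ x, r₂ ≠ p, r₂ ≠ x, r₁ ≠ r₂, and g x (f p x) = p; hence Conie, observing x and the revealed sequence, determines the prize door unambiguously and wins in all cases. -/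
/-- Reveal function: the two doors different from `p` and `x`, in ascending
order if `p ≠ x`, and (two of the three doors different from `x`) in
descending order if `p = x`. -/
def revealFn (p x : Fin 4) : Fin 4 × Fin 4 :=
  let l := (List.finRange 4).filter (fun d => d ≠ p ∧ d ≠ x)
  if p = x then (l.getD 1 0, l.getD 0 0) else (l.getD 0 0, l.getD 1 0)

/-- Decoding: ascending order signals the unique unrevealed door other than
`x`; descending order signals `x` itself. -/
def decodeFn (x : Fin 4) (r : Fin 4 × Fin 4) : Fin 4 :=
  if r.1 < r.2 then
    ((List.finRange 4).filter (fun d => d ≠ x ∧ d ≠ r.1 ∧ d ≠ r.2)).headD 0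
  else x

/-- **Perfect signaling in the four-door game with sequential revelation.**
There are a reveal function `f` and a decoding function `g` such that the two
doors revealed by `f p x` are valid (distinct from `p`, from `x` and from each
other) and Conie, observing her choice `x` and the revealed sequence, decodes
the prize door unambiguously: `g x (f p x) = p`. Hence she wins in all cases. -/
theorem perfect_signaling :
    ∃ (f : Fin 4 → Fin 4 → Fin 4 × Fin 4) (g : Fin 4 → Fin 4 × Fin 4 → Fin 4),
      ∀ p x : Fin 4,
        (f p x).1 ≠ p ∧ (f p x).1 ≠ x ∧ (f p x).2 ≠ p ∧ (f p x).2 ≠ x ∧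
        (f p x).1 ≠ (f p x).2 ∧ g x (f p x) = p := by
  exact ⟨revealFn, decodeFn, by decide⟩
end
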